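/- arXiv:1904.03347 — 2 statements merged into one kernel-verified Lean document; each statement's English description precedes it below -/
import Mathlib

section
/- (Validity of LB-N) Let C be an initial configuration of the BRP satisfying the condition of Property 4, and let 𝔅¹ be the set of blocks badly placed in C. Then f(Fin B) ≥ |𝔅¹| + 1. -/
/-- A configuration of the BRP: each stack holds a list of blocks, bottom to top. -/
abbrev Config (B S : ℕ) := Fin S → List (Fin B)

/-- Every block occurs exactly once among the stacks. -/
def IsConfig {B S : ℕ} (C : Config B S) : Prop :=
  ∀ b : Fin B, (∑ s : Fin S, (C s).count b) = 1

/-- `a` lies strictly below `b` in stack `s` of `C`. -/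
def StrictlyBelow {B S : ℕ} (C : Config B S) (s : Fin S) (a b : Fin B) : Prop :=
  ∃ i j : ℕ, i < j ∧ (C s)[i]? = some a ∧ (C s)[j]? = some b

/-- A block is badly placed if some smaller-labelled block lies below it in its stack. -/
def BadlyPlaced {B S : ℕ} (C : Config B S) (b : Fin B) : Prop :=
  ∃ s a, a < b ∧ StrictlyBelow C s a b

/-- Moves: retrieve the top block of a stack, or relocate the top block of one
stack onto another stack. -/
inductive Move (S : ℕ) where
  | retrieve (s : Fin S)
  | relocate (src dst : Fin S)

def applyMove {B S : ℕ} (C : Config B S) : Move S → Config B S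
  | .retrieve s => Function.update C s (C s).dropLast
  | .relocate src dst =>
    match (C src).getLast? with
    | some b =>
      let C' := Function.update C src (C src).dropLast
      Function.update C' dst (C' dst ++ [b])
    | none => C

def Enabled {B S : ℕ} (C : Config B S) : Move S → Prop
  | .retrieve s => ∃ b, (C s).getLast? = some b ∧ ∀ (s' : Fin S), ∀ b' ∈ C s', b ≤ b'
  | .relocate src dst => src ≠ dst ∧ C src ≠ []

def play {B S : ℕ} (C : Config B S) : List (Move S) → Config B S
  | [] => C
  | m :: ms => play (applyMove C m) ms

def AllEnabled {B S : ℕ} (C : Config B S) : List (Move S) → Prop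
  | [] => True
  | m :: ms => Enabled C m ∧ AllEnabled (applyMove C m) ms

/-- A feasible move sequence: every move is enabled and at the end all blocks
have been retrieved. -/
def Feasible {B S : ℕ} (C : Config B S) (ms : List (Move S)) : Prop :=
  AllEnabled C ms ∧ ∀ s, play C ms s = []

/-- `b` is the block moved by `m` (a relocation) performed in configuration `C`. -/
def MovedBlock {B S : ℕ} (C : Config B S) (m : Move S) (b : Fin B) : Prop :=
  ∃ src dst, m = .relocate src dst ∧ src ≠ dst ∧ (C src).getLast? = some b

/-- The four types of relocation moves. -/
inductive MType where
  | BB | BG | GB | GG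

/-- The relocation `m`, moving block `b` from configuration `C`, has the given type. -/
def MTypeOf {B S : ℕ} (C : Config B S) (m : Move S) (b : Fin B) : MType → Prop
  | .BB => BadlyPlaced C b ∧ BadlyPlaced (applyMove C m) b
  | .BG => BadlyPlaced C b ∧ ¬ BadlyPlaced (applyMove C m) b
  | .GB => ¬ BadlyPlaced C b ∧ BadlyPlaced (applyMove C m) b
  | .GG => ¬ BadlyPlaced C b ∧ ¬ BadlyPlaced (applyMove C m) b

/-- `m` is a relocation of a block of `𝔅`. -/
def RelocIn {B S : ℕ} (𝔅 : Set (Fin B)) (C : Config B S) (m : Move S) : Prop :=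
  ∃ b ∈ 𝔅, MovedBlock C m b

/-- `m` is a relocation of a block of `𝔅` of type `mt`. -/
def RelocTypeIn {B S : ℕ} (mt : MType) (𝔅 : Set (Fin B)) (C : Config B S) (m : Move S) : Prop :=
  ∃ b ∈ 𝔅, MovedBlock C m b ∧ MTypeOf C m b mt

/-- `m` is a non-BG relocation of a block of `𝔅`. -/
def RelocNonBGIn {B S : ℕ} (𝔅 : Set (Fin B)) (C : Config B S) (m : Move S) : Prop :=
  ∃ b ∈ 𝔅, MovedBlock C m b ∧ ¬ MTypeOf C m b MType.BG

/-- Count the moves of a sequence satisfying `P` (evaluated in the configuration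
in which each move is performed). -/
noncomputable def countMoves {B S : ℕ} (P : Config B S → Move S → Prop) :
    Config B S → List (Move S) → ℕ
  | _, [] => 0
  | C, m :: ms =>
    (@ite ℕ (P C m) (Classical.propDecidable _) 1 0) + countMoves P (applyMove C m) ms

/-- Minimum over feasible move sequences of the number of moves satisfying `P`. -/
noncomputable def fMin {B S : ℕ} (C : Config B S) (P : Config B S → Move S → Prop) : ℕ :=
  sInf { n | ∃ ms, Feasible C ms ∧ countMoves P C ms = n }

/-- `f(𝔅)`: least number of relocations applied to blocks of `𝔅`. -/
noncomputable def fRel {B S : ℕ} (C : Config B S) (𝔅 : Set (Fin B)) : ℕ :=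
  fMin C (RelocIn 𝔅)

/-- `f_mt(𝔅)`: least number of type-`mt` relocations applied to blocks of `𝔅`. -/
noncomputable def fTyp {B S : ℕ} (C : Config B S) (mt : MType) (𝔅 : Set (Fin B)) : ℕ :=
  fMin C (RelocTypeIn mt 𝔅)

/-- `f_nonBG(𝔅)`: least number of non-BG relocations applied to blocks of `𝔅`. -/
noncomputable def fNonBG {B S : ℕ} (C : Config B S) (𝔅 : Set (Fin B)) : ℕ :=
  fMin C (RelocNonBGIn 𝔅)

/-- The top 1st layer: the topmost block of each stack. -/
def TopLayer {B S : ℕ} (C : Config B S) : Set (Fin B) :=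
  {b | ∃ s, (C s).getLast? = some b}

/-- The top `k` layers: the topmost `k` blocks of every stack. -/
def TopK {B S : ℕ} (C : Config B S) (k : ℕ) : Set (Fin B) :=
  {b | ∃ s, b ∈ (C s).drop ((C s).length - k)}

/-- The top `j`-th layer: the `j`-th block from the top of every stack. -/
def TopJth {B S : ℕ} (C : Config B S) (j : ℕ) : Set (Fin B) :=
  {b | ∃ s, (C s)[(C s).length - j]? = some b}

/-- A virtual layer: a set of blocks containing exactly one block from each stack. -/
def VirtualLayer {B S : ℕ} (C : Config B S) (V : Set (Fin B)) : Prop :=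
  ∀ s : Fin S, ∃! b : Fin B, b ∈ V ∧ b ∈ C s

/-- `a` lies at or below the `V`-block of stack `s`. -/
def AtOrBelowLayer {B S : ℕ} (C : Config B S) (V : Set (Fin B)) (s : Fin S) (a : Fin B) : Prop :=
  ∃ b j, b ∈ V ∧ (C s)[j]? = some b ∧ a ∈ (C s).take (j + 1)

/-- `V` is a virtual layer satisfying the conditions of Property 5:
(1) in some stack, a block strictly below the `V`-block of that stack has a smaller
label than every block of `V`; (2) every badly placed block of `V` has a label
strictly greater than the minimum label present in stack `s` after deleting all
blocks strictly above the `V`-block of `s`, for every stack `s`. -/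
def P5 {B S : ℕ} (C : Config B S) (V : Set (Fin B)) : Prop :=
  VirtualLayer C V ∧
  (∃ s a b, b ∈ V ∧ StrictlyBelow C s a b ∧ ∀ c ∈ V, a < c) ∧
  (∀ b ∈ V, BadlyPlaced C b → ∀ s : Fin S, ∃ a, AtOrBelowLayer C V s a ∧ a < b)

/-- A pair of virtual layers `V₁` (upper), `V₂` (lower) with shared well-placed
block `bstar` satisfying the conditions of Property 7. -/
def P7 {B S : ℕ} (C : Config B S) (V₁ V₂ : Set (Fin B)) (bstar : Fin B) : Prop :=
  V₁ ∩ V₂ = {bstar} ∧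
  ¬ BadlyPlaced C bstar ∧
  (∀ s : Fin S, bstar ∉ C s →
    ∃ b₁ b₂, b₁ ∈ V₁ ∧ b₂ ∈ V₂ ∧ StrictlyBelow C s b₂ b₁) ∧
  P5 C V₁ ∧ P5 C V₂ ∧
  (∀ s : Fin S, ∃ a, AtOrBelowLayer C V₁ s a ∧ a ≤ bstar) ∧
  (∃ s : Fin S, ∀ a, AtOrBelowLayer C V₁ s a → bstar ≤ a)

/-- Push blocks one by one onto the indicated stacks. -/
def pushAll {B S : ℕ} (C : Config B S) : List (Fin B × Fin S) → Config B S
  | [] => C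
  | p :: rest => pushAll (Function.update C p.2 (C p.2 ++ [p.1])) rest

/-- The blocks lying strictly above position `i` of stack `s`, listed from the
top of the stack downward (the processing order of the experiment). -/
def aboveList {B S : ℕ} (C : Config B S) (s : Fin S) (i : ℕ) : List (Fin B) :=
  ((C s).drop (i + 1)).reverse

/-- The arrangement resulting from the experiment of Property 4: the blocks above
position `i` of stack `s` are relocated exactly once, from the top downward, onto
the stacks listed in `ds`. -/
def expResult {B S : ℕ} (C : Config B S) (s : Fin S) (i : ℕ) (ds : List (Fin S)) :
    Config B S :=
  pushAll (Function.update C s ((C s).take (i + 1))) ((aboveList C s i).zip ds)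

/-- The condition of Property 4 (target block at position `i` of stack `sStar`):
in every experiment, some relocated block ends badly placed. -/
def P4Cond {B S : ℕ} (C : Config B S) (sStar : Fin S) (i : ℕ) : Prop :=
  ∀ ds : List (Fin S), ds.length = (aboveList C sStar i).length →
    (∀ d ∈ ds, d ≠ sStar) →
    ∃ b ∈ aboveList C sStar i, BadlyPlaced (expResult C sStar i ds) b

/-- The set `𝔅⁴`: the blocks above the target block together with, for each
nonempty stack other than the target's stack, its block of minimum label. -/
def B4Set {B S : ℕ} (C : Config B S) (sStar : Fin S) (i : ℕ) : Set (Fin B) :=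
  {b | b ∈ aboveList C sStar i} ∪
  {b | ∃ s, s ≠ sStar ∧ b ∈ C s ∧ ∀ b' ∈ C s, b ≤ b'}

/-- The number of direct blockages: adjacent pairs in a stack whose upper block
has a strictly larger label. -/
def directBlockages {B S : ℕ} (C : Config B S) : ℕ :=
  ∑ s : Fin S, (((C s).zip (C s).tail).filter (fun p => decide (p.1 < p.2))).length

/-- The number of relocations in a move sequence. -/
def relocCount {S : ℕ} (ms : List (Move S)) : ℕ :=
  (ms.filter (fun m => match m with | Move.relocate _ _ => true | Move.retrieve _ => false)).length

/-- The minimum number of relocations over all feasible move sequences. -/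
noncomputable def fAll {B S : ℕ} (C : Config B S) : ℕ :=
  sInf { n | ∃ ms, Feasible C ms ∧ relocCount ms = n }

/-- `g(L)`: `L` plus the minimum number of direct blockages over all partial
plans with exactly `L` relocations. -/
noncomputable def gIter {B S : ℕ} (C : Config B S) (L : ℕ) : ℕ :=
  L + sInf { d | ∃ ms : List (Move S), AllEnabled C ms ∧ relocCount ms = L ∧
      d = directBlockages (play C ms) }

/-!
A block that is not relocated keeps its status (badly or well placed) under every move, and at
the end of a feasible plan no block is left, so each badly placed block is relocated at least
once and `f(Fin B) ≥ |𝔅¹|`. In a plan attaining this bound every relocation is a BG move.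
Until the target `t` is retrieved, such a plan must therefore relocate the blocks above `t`
from the top down, never back onto the target stack, and so its destinations define an
experiment of Property 4. By induction along the plan, every stack other than the target's
contains a block no larger than any block of the same stack of the experiment;
hence each block above `t`, well placed right after its relocation in the plan, is also well
placed in the experiment, which contradicts the condition of Property 4.
-/

namespace BRP

open List

variable {B S : ℕ}

lemma pair_sublist_iff_exists_getElem? {α : Type*} {l : List α} {a b : α} :
    [a, b] <+ l ↔ ∃ i j : ℕ, i < j ∧ l[i]? = some a ∧ l[j]? = some b := by
  constructor
  · intro h
    obtain ⟨l₁, l₂, rfl, ha, hb⟩ := cons_sublist_iff.1 h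
    obtain ⟨i, hi, rfl⟩ := getElem_of_mem ha
    obtain ⟨j, hj, rfl⟩ := getElem_of_mem (singleton_sublist.1 hb)
    exact ⟨i, l₁.length + j, by omega, by simp [getElem?_append_left hi],
      by simp [getElem?_append_right]⟩
  · rintro ⟨i, j, hij, ha, hb⟩
    rw [← take_append_drop (i + 1) l]
    refine (singleton_sublist.2 ?_).append (singleton_sublist.2 ?_)
    · have : (l.take (i + 1))[i]? = some a := by rw [getElem?_take, if_pos (by omega), ha]
      exact mem_of_getElem? this
    · have : (l.drop (i + 1))[j - (i + 1)]? = some b := by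
        rw [getElem?_drop, show i + 1 + (j - (i + 1)) = j by omega, hb]
      exact mem_of_getElem? this

lemma pair_sublist_append_singleton_iff {α : Type*} {l : List α} {a b c : α} (hb : b ≠ c) :
    [a, b] <+ l ++ [c] ↔ [a, b] <+ l := by
  refine ⟨fun h => ?_, fun h => h.trans (sublist_append_left l [c])⟩
  obtain ⟨l₁, l₂, hl, h₁, h₂⟩ := sublist_append_iff.1 h
  rcases sublist_singleton.1 h₂ with rfl | rfl
  · simpa [hl] using h₁
  · exact absurd (append_inj' (show [a] ++ [b] = l₁ ++ [c] from hl) rfl).2 (by simpa using hb)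

lemma pair_sublist_append_singleton_self_iff {α : Type*} {l : List α} {a c : α} :
    [a, c] <+ l ++ [c] ↔ a ∈ l := by
  refine ⟨fun h => ?_, fun h => (singleton_sublist.2 h).append (Sublist.refl [c])⟩
  obtain ⟨l₁, l₂, hl, h₁, h₂⟩ := sublist_append_iff.1 h
  rcases sublist_singleton.1 h₂ with rfl | rfl
  · exact (show [a, c] <+ l by simpa [hl] using h₁).subset mem_cons_self
  · rw [← (append_inj' (show [a] ++ [c] = l₁ ++ [c] from hl) rfl).1] at h₁
    exact singleton_sublist.1 h₁

lemma badlyPlaced_iff_sublist {D : Config B S} {b : Fin B} :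
    BadlyPlaced D b ↔ ∃ s a, a < b ∧ [a, b] <+ D s := by
  simp only [BadlyPlaced, StrictlyBelow, pair_sublist_iff_exists_getElem?]

def pushBlock (D : Config B S) (d : Fin S) (c : Fin B) : Config B S :=
  Function.update D d (D d ++ [c])

lemma applyMove_relocate_of_eq_append {D : Config B S} {src dst : Fin S} {l : List (Fin B)}
    {c : Fin B} (h : D src = l ++ [c]) :
    applyMove D (.relocate src dst) = pushBlock (Function.update D src l) dst c := by
  simp [applyMove, pushBlock, h]

lemma badlyPlaced_update_iff {D : Config B S} {u : Fin S} {l : List (Fin B)} {b : Fin B}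
    (h : ∀ a, [a, b] <+ l ↔ [a, b] <+ D u) :
    BadlyPlaced (Function.update D u l) b ↔ BadlyPlaced D b := by
  simp only [badlyPlaced_iff_sublist]
  refine exists_congr fun s => exists_congr fun a => and_congr_right fun _ => ?_
  rcases eq_or_ne s u with rfl | hs
  · simp [h]
  · simp [Function.update_of_ne hs]

lemma badlyPlaced_pushBlock_iff {D : Config B S} {d : Fin S} {b c : Fin B} (hb : b ≠ c) :
    BadlyPlaced (pushBlock D d c) b ↔ BadlyPlaced D b :=
  badlyPlaced_update_iff fun _ => pair_sublist_append_singleton_iff hb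

lemma badlyPlaced_pushBlock_of_mem {D : Config B S} {d : Fin S} {a c : Fin B} (ha : a ∈ D d)
    (hac : a < c) : BadlyPlaced (pushBlock D d c) c :=
  badlyPlaced_iff_sublist.2 ⟨d, a, hac, by
    simpa [pushBlock] using pair_sublist_append_singleton_self_iff.2 ha⟩

lemma badlyPlaced_pushBlock_self_iff {D : Config B S} {d : Fin S} {c : Fin B}
    (hc : ∀ s, c ∉ D s) : BadlyPlaced (pushBlock D d c) c ↔ ∃ a ∈ D d, a < c := by
  refine ⟨fun h => ?_, fun ⟨a, ha, hac⟩ => badlyPlaced_pushBlock_of_mem ha hac⟩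
  obtain ⟨s, a, hac, hs⟩ := badlyPlaced_iff_sublist.1 h
  rcases eq_or_ne s d with rfl | hsd
  · simp only [pushBlock, Function.update_self] at hs
    exact ⟨a, pair_sublist_append_singleton_self_iff.1 hs, hac⟩
  · simp only [pushBlock, Function.update_of_ne hsd] at hs
    exact absurd (hs.subset (by simp)) (hc s)

lemma badlyPlaced_update_of_eq_append_iff {D : Config B S} {u : Fin S} {l : List (Fin B)}
    {b c : Fin B} (h : D u = l ++ [c]) (hb : b ≠ c) :
    BadlyPlaced (Function.update D u l) b ↔ BadlyPlaced D b :=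
  badlyPlaced_update_iff fun _ => by rw [h, pair_sublist_append_singleton_iff hb]

lemma not_badlyPlaced_of_forall_le {D : Config B S} {b : Fin B}
    (h : ∀ s, ∀ a ∈ D s, b ≤ a) : ¬ BadlyPlaced D b := by
  rintro ⟨s, a, hab, hs⟩
  exact (h s a ((pair_sublist_iff_exists_getElem?.2 hs).subset mem_cons_self)).not_gt hab

lemma Enabled.exists_movedBlock {D : Config B S} {src dst : Fin S}
    (hm : Enabled D (.relocate src dst)) :
    ∃ l c, D src = l ++ [c] ∧ MovedBlock D (.relocate src dst) c := by
  obtain ⟨hne, hsrc⟩ := hm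
  obtain ⟨l, c, hl⟩ := (eq_nil_or_concat (D src)).resolve_left hsrc
  exact ⟨l, c, by simpa using hl, src, dst, rfl, hne, by simp [hl]⟩

lemma MovedBlock.unique {D : Config B S} {m : Move S} {b c : Fin B}
    (hb : MovedBlock D m b) (hc : MovedBlock D m c) : b = c := by
  obtain ⟨src, dst, rfl, -, hb⟩ := hb
  obtain ⟨_, _, ⟨⟩, -, hc⟩ := hc
  exact Option.some.inj (hb.symm.trans hc)

lemma badlyPlaced_applyMove_iff {D : Config B S} {m : Move S} {b : Fin B} (hm : Enabled D m)
    (hb : ¬ MovedBlock D m b) : BadlyPlaced (applyMove D m) b ↔ BadlyPlaced D b := by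
  cases m with
  | retrieve u =>
    obtain ⟨r, hr, hmin⟩ := hm
    obtain ⟨l, hl⟩ := getLast?_eq_some_iff.1 hr
    have happly : applyMove D (.retrieve u) = Function.update D u l := by simp [applyMove, hl]
    rw [happly]
    rcases eq_or_ne b r with rfl | hbr
    · have hmin' : ∀ s, ∀ a ∈ Function.update D u l s, b ≤ a := by
        intro s a ha
        rcases eq_or_ne s u with rfl | hs
        · exact hmin s a (by simp_all)
        · exact hmin s a (by simpa [Function.update_of_ne hs] using ha)
      exact iff_of_false (not_badlyPlaced_of_forall_le hmin') (not_badlyPlaced_of_forall_le hmin)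
    · exact badlyPlaced_update_of_eq_append_iff hl hbr
  | relocate src dst =>
    obtain ⟨l, c, hl, hc⟩ := Enabled.exists_movedBlock hm
    have hbc : b ≠ c := by rintro rfl; exact hb hc
    rw [applyMove_relocate_of_eq_append hl, badlyPlaced_pushBlock_iff hbc,
      badlyPlaced_update_of_eq_append_iff hl hbc]

lemma feasible_cons_iff {D : Config B S} {m : Move S} {ms : List (Move S)} :
    Feasible D (m :: ms) ↔ Enabled D m ∧ Feasible (applyMove D m) ms := by
  simp only [Feasible, AllEnabled, play, and_assoc]

lemma setOf_badlyPlaced_subset_of_not_movedBlock {D : Config B S} {m : Move S}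
    (hm : Enabled D m) (hc : ∀ c, ¬ MovedBlock D m c) :
    {b | BadlyPlaced D b} ⊆ {b | BadlyPlaced (applyMove D m) b} :=
  fun b hb => (badlyPlaced_applyMove_iff hm (hc b)).2 hb

lemma setOf_badlyPlaced_subset_insert {D : Config B S} {m : Move S} {c : Fin B}
    (hm : Enabled D m) (hc : MovedBlock D m c) :
    {b | BadlyPlaced D b} ⊆ insert c {b | BadlyPlaced (applyMove D m) b} := by
  intro b hb
  by_cases hbm : MovedBlock D m b
  · exact Or.inl (MovedBlock.unique hbm hc)
  · exact Or.inr ((badlyPlaced_applyMove_iff hm hbm).2 hb)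

lemma countMoves_cons_of_movedBlock {D : Config B S} {m : Move S} {c : Fin B}
    (hc : MovedBlock D m c) (ms : List (Move S)) :
    countMoves (RelocIn Set.univ) D (m :: ms) =
      countMoves (RelocIn Set.univ) (applyMove D m) ms + 1 := by
  rw [countMoves, if_pos ⟨c, Set.mem_univ c, hc⟩, add_comm]

lemma countMoves_cons_of_not_movedBlock {D : Config B S} {m : Move S}
    (hc : ∀ c, ¬ MovedBlock D m c) (ms : List (Move S)) :
    countMoves (RelocIn Set.univ) D (m :: ms) =
      countMoves (RelocIn Set.univ) (applyMove D m) ms := by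
  rw [countMoves, if_neg fun ⟨c, _, h⟩ => hc c h, zero_add]

theorem ncard_badlyPlaced_le_countMoves {D : Config B S} {ms : List (Move S)}
    (h : Feasible D ms) : {b | BadlyPlaced D b}.ncard ≤ countMoves (RelocIn Set.univ) D ms := by
  induction ms generalizing D with
  | nil =>
    have hempty : {b | BadlyPlaced D b} = ∅ :=
      Set.eq_empty_of_forall_notMem fun b =>
        not_badlyPlaced_of_forall_le fun s a ha => by simp [show D s = [] from h.2 s] at ha
    simp [hempty]
  | cons m ms ih =>
    obtain ⟨hm, hf⟩ := feasible_cons_iff.1 h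
    by_cases hc : ∃ c, MovedBlock D m c
    · obtain ⟨c, hc⟩ := hc
      calc {b | BadlyPlaced D b}.ncard
          ≤ (insert c {b | BadlyPlaced (applyMove D m) b}).ncard :=
            Set.ncard_le_ncard (setOf_badlyPlaced_subset_insert hm hc)
        _ ≤ {b | BadlyPlaced (applyMove D m) b}.ncard + 1 := Set.ncard_insert_le _ _
        _ ≤ _ := by rw [countMoves_cons_of_movedBlock hc]; exact Nat.add_le_add_right (ih hf) 1
    · replace hc : ∀ c, ¬ MovedBlock D m c := fun c h => hc ⟨c, h⟩
      rw [countMoves_cons_of_not_movedBlock hc]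
      exact (Set.ncard_le_ncard (setOf_badlyPlaced_subset_of_not_movedBlock hm hc)).trans (ih hf)

/-- A feasible plan attaining the lower bound `ncard_badlyPlaced_le_countMoves`. -/
def IsTight (D : Config B S) (ms : List (Move S)) : Prop :=
  Feasible D ms ∧ countMoves (RelocIn Set.univ) D ms ≤ {b | BadlyPlaced D b}.ncard

lemma IsTight.tail {D : Config B S} {m : Move S} {ms : List (Move S)} (h : IsTight D (m :: ms)) :
    IsTight (applyMove D m) ms := by
  obtain ⟨hm, hf⟩ := feasible_cons_iff.1 h.1
  refine ⟨hf, ?_⟩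
  by_cases hc : ∃ c, MovedBlock D m c
  · obtain ⟨c, hc⟩ := hc
    have := h.2
    rw [countMoves_cons_of_movedBlock hc] at this
    have := (Set.ncard_le_ncard (setOf_badlyPlaced_subset_insert hm hc)).trans
      (Set.ncard_insert_le c _)
    omega
  · replace hc : ∀ c, ¬ MovedBlock D m c := fun c h => hc ⟨c, h⟩
    rw [← countMoves_cons_of_not_movedBlock hc]
    exact h.2.trans (Set.ncard_le_ncard (setOf_badlyPlaced_subset_of_not_movedBlock hm hc))

lemma IsTight.mTypeOf_BG {D : Config B S} {m : Move S} {ms : List (Move S)} {c : Fin B}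
    (h : IsTight D (m :: ms)) (hc : MovedBlock D m c) : MTypeOf D m c .BG := by
  obtain ⟨hm, hf⟩ := feasible_cons_iff.1 h.1
  by_contra hBG
  have hsub : {b | BadlyPlaced D b} ⊆ {b | BadlyPlaced (applyMove D m) b} := by
    intro b hb
    rcases setOf_badlyPlaced_subset_insert hm hc hb with rfl | hb'
    · by_contra hb'
      exact hBG ⟨hb, hb'⟩
    · exact hb'
  have := h.2
  rw [countMoves_cons_of_movedBlock hc] at this
  have := (Set.ncard_le_ncard hsub).trans (ncard_badlyPlaced_le_countMoves hf)
  omega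

def blocks (D : Config B S) : Multiset (Fin B) :=
  ∑ s, (D s : Multiset (Fin B))

lemma mem_blocks {D : Config B S} {b : Fin B} : b ∈ blocks D ↔ ∃ s, b ∈ D s := by
  simp [blocks, Multiset.mem_sum]

lemma blocks_update (D : Config B S) (u : Fin S) (l : List (Fin B)) :
    blocks (Function.update D u l) + D u = blocks D + l := by
  simp only [blocks, ← Finset.add_sum_erase _ _ (Finset.mem_univ u), Function.update_self]
  rw [Finset.sum_congr rfl fun s hs => by rw [Function.update_of_ne (Finset.ne_of_mem_erase hs)]]
  abel

lemma blocks_pushBlock (D : Config B S) (d : Fin S) (c : Fin B) :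
    blocks (pushBlock D d c) = blocks D + {c} := by
  have := blocks_update D d (D d ++ [c])
  rw [← Multiset.coe_add, add_comm (D d : Multiset (Fin B)), ← add_assoc] at this
  exact add_right_cancel this

lemma blocks_applyMove_relocate {D : Config B S} {src dst : Fin S} {l : List (Fin B)}
    {c : Fin B} (h : D src = l ++ [c]) : blocks (applyMove D (.relocate src dst)) = blocks D := by
  have := blocks_update D src l
  rw [h, ← Multiset.coe_add, Multiset.coe_singleton] at this
  rw [applyMove_relocate_of_eq_append h, blocks_pushBlock]
  exact add_right_cancel (b := (l : Multiset (Fin B))) (by rw [← this]; abel)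

lemma blocks_applyMove_retrieve {D : Config B S} {u : Fin S} {l : List (Fin B)} {r : Fin B}
    (h : D u = l ++ [r]) : blocks (applyMove D (.retrieve u)) + {r} = blocks D := by
  have := blocks_update D u l
  rw [h, ← Multiset.coe_add, Multiset.coe_singleton] at this
  have happly : applyMove D (.retrieve u) = Function.update D u l := by simp [applyMove, h]
  rw [happly]
  exact add_right_cancel (b := (l : Multiset (Fin B))) (by rw [← this]; abel)

lemma nodup_blocks_of_isConfig {C : Config B S} (hC : IsConfig C) : (blocks C).Nodup :=
  Multiset.nodup_iff_count_le_one.2 fun b => by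
    simp [blocks, Multiset.count_sum', hC b]

lemma nodup_of_nodup_blocks {D : Config B S} (hD : (blocks D).Nodup) (s : Fin S) :
    (D s).Nodup :=
  Multiset.coe_nodup.1 <| Multiset.nodup_of_le
    (Finset.single_le_sum (f := fun s => (D s : Multiset (Fin B))) (fun _ _ => zero_le)
      (Finset.mem_univ s)) hD

lemma eq_of_mem_of_nodup_blocks {D : Config B S} (hD : (blocks D).Nodup) {b : Fin B}
    {s s' : Fin S} (h : b ∈ D s) (h' : b ∈ D s') : s = s' := by
  by_contra hne
  have hle : (D s : Multiset (Fin B)) + D s' ≤ blocks D := by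
    have := Finset.sum_le_sum_of_subset (f := fun s => (D s : Multiset (Fin B)))
      (Finset.subset_univ {s, s'})
    rwa [Finset.sum_pair hne] at this
  exact Multiset.disjoint_left.1 (Multiset.nodup_add.1 (Multiset.nodup_of_le hle hD)).2.2 h h'

lemma exists_lt_of_badlyPlaced_top {D : Config B S} (hD : (blocks D).Nodup) {s : Fin S}
    {l : List (Fin B)} {c : Fin B} (hl : D s = l ++ [c]) (hc : BadlyPlaced D c) :
    ∃ a ∈ l, a < c := by
  obtain ⟨s', a, hac, hs'⟩ := badlyPlaced_iff_sublist.1 hc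
  obtain rfl : s' = s :=
    eq_of_mem_of_nodup_blocks hD (b := c) (hs'.subset (by simp)) (by simp [hl])
  exact ⟨a, pair_sublist_append_singleton_self_iff.1 (hl ▸ hs'), hac⟩

lemma play_append (D : Config B S) (ms ms' : List (Move S)) :
    play D (ms ++ ms') = play (play D ms) ms' := by
  induction ms generalizing D with
  | nil => rfl
  | cons m ms ih => exact ih _

lemma allEnabled_append {D : Config B S} {ms ms' : List (Move S)} :
    AllEnabled D (ms ++ ms') ↔ AllEnabled D ms ∧ AllEnabled (play D ms) ms' := by
  induction ms generalizing D with
  | nil => simp [AllEnabled, play]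
  | cons m ms ih => simp only [List.cons_append, AllEnabled, play, ih, and_assoc]

/-- Relocate everything above `r` onto `s₂`, then retrieve `r`. -/
lemma exists_allEnabled_retrieve_of_forall_le {s₁ s₂ : Fin S} (hs : s₁ ≠ s₂) {r : Fin B}
    {l : List (Fin B)} (rest : List (Fin B)) {D : Config B S} (hD : D s₁ = l ++ r :: rest)
    (hmin : ∀ b ∈ blocks D, r ≤ b) :
    ∃ ms, AllEnabled D ms ∧ blocks (play D ms) + {r} = blocks D := by
  induction rest using List.reverseRecOn generalizing D with
  | nil =>
    have henabled : Enabled D (.retrieve s₁) :=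
      ⟨r, by simp [hD], fun s b hb => hmin b (mem_blocks.2 ⟨s, hb⟩)⟩
    exact ⟨[.retrieve s₁], ⟨henabled, trivial⟩,
      blocks_applyMove_retrieve (by simpa using hD)⟩
  | append_singleton rest x ih =>
    have hD' : D s₁ = (l ++ r :: rest) ++ [x] := by simp [hD]
    have hblocks := blocks_applyMove_relocate (dst := s₂) hD'
    obtain ⟨ms, hms, hplay⟩ := ih (D := applyMove D (.relocate s₁ s₂))
      (by simp [applyMove_relocate_of_eq_append hD', pushBlock, Function.update_of_ne hs])
      (by rwa [hblocks])
    exact ⟨.relocate s₁ s₂ :: ms, ⟨⟨hs, by simp [hD]⟩, hms⟩,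
      by rw [play, hplay, hblocks]⟩

theorem exists_feasible (hS : 2 ≤ S) (D : Config B S) : ∃ ms, Feasible D ms := by
  induction hn : Multiset.card (blocks D) using Nat.strong_induction_on generalizing D with
  | _ n ih =>
  by_cases hempty : blocks D = 0
  · refine ⟨[], trivial, fun s => List.eq_nil_iff_forall_not_mem.2 fun b hb => ?_⟩
    simpa [hempty] using mem_blocks (D := D).2 ⟨s, hb⟩
  · have hne : (blocks D).toFinset.Nonempty := by simpa [Multiset.toFinset_nonempty] using hempty
    set r := (blocks D).toFinset.min' hne
    obtain ⟨s₁, hr⟩ :=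
      mem_blocks.1 (Multiset.mem_toFinset.1 ((blocks D).toFinset.min'_mem hne))
    obtain ⟨l, rest, hD⟩ := List.append_of_mem hr
    have : Nontrivial (Fin S) := Fin.nontrivial_iff_two_le.2 hS
    obtain ⟨s₂, hs₂⟩ := exists_ne s₁
    obtain ⟨ms, hms, hplay⟩ := exists_allEnabled_retrieve_of_forall_le hs₂.symm rest hD
      fun b hb => (blocks D).toFinset.min'_le b (Multiset.mem_toFinset.2 hb)
    have hcard : Multiset.card (blocks (play D ms)) < n := by
      rw [← hn, ← hplay, Multiset.card_add, Multiset.card_singleton]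
      exact Nat.lt_succ_self _
    obtain ⟨ms', hms'⟩ := ih _ hcard (play D ms) rfl
    exact ⟨ms ++ ms', allEnabled_append.2 ⟨hms, hms'.1⟩,
      fun s => by rw [play_append]; exact hms'.2 s⟩

lemma pushAll_append (D : Config B S) (ps ps' : List (Fin B × Fin S)) :
    pushAll D (ps ++ ps') = pushAll (pushAll D ps) ps' := by
  induction ps generalizing D with
  | nil => rfl
  | cons p ps ih => exact ih _

lemma zip_append_singleton_of_lt {α β : Type*} {l : List α} {ds : List β} (d : β)
    (hk : ds.length < l.length) : l.zip (ds ++ [d]) = l.zip ds ++ [(l[ds.length], d)] := by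
  induction ds generalizing l with
  | nil =>
    cases l with
    | nil => simp at hk
    | cons a l => simp
  | cons x ds ih =>
    cases l with
    | nil => simp at hk
    | cons a l => simp [ih (l := l) (by simpa using hk)]

section Experiment

variable {C : Config B S} {sStar : Fin S} {i : ℕ}

lemma expResult_nil :
    expResult C sStar i [] = Function.update C sStar ((C sStar).take (i + 1)) := by
  simp [expResult, pushAll]

lemma expResult_append_singleton {ds : List (Fin S)} (d : Fin S)
    (hk : ds.length < (aboveList C sStar i).length) :
    expResult C sStar i (ds ++ [d]) =
      pushBlock (expResult C sStar i ds) d (aboveList C sStar i)[ds.length] := by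
  rw [expResult, zip_append_singleton_of_lt d hk, pushAll_append]
  rfl

lemma blocks_expResult {ds : List (Fin S)} (h : ds.length ≤ (aboveList C sStar i).length) :
    blocks (expResult C sStar i ds) + ((aboveList C sStar i).drop ds.length : List (Fin B)) =
      blocks C := by
  induction ds using List.reverseRecOn with
  | nil =>
    have := blocks_update C sStar ((C sStar).take (i + 1))
    have hCs : (C sStar : Multiset (Fin B)) =
        ((C sStar).take (i + 1) : List (Fin B)) + ((C sStar).drop (i + 1) : List (Fin B)) := by
      rw [Multiset.coe_add, take_append_drop]
    rw [hCs] at this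
    simp only [expResult_nil, aboveList, length_nil, drop_zero, Multiset.coe_reverse]
    exact add_right_cancel (b := (((C sStar).take (i + 1) : List (Fin B)) : Multiset (Fin B)))
      (by rw [← this]; abel)
  | append_singleton ds d ih =>
    simp only [length_append, length_singleton] at h ⊢
    rw [expResult_append_singleton d (by omega), blocks_pushBlock, ← ih (by omega),
      drop_eq_getElem_cons (show ds.length < _ by omega)]
    simp [add_assoc]

/-- Invariant of a tight plan from `C` once the first `ds.length` blocks above the target
(topmost first) have been relocated, onto the stacks `ds`: in every other stack, each block of
the partial experiment `expResult C sStar i ds` is bounded below by a block of `D`. -/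
structure TracksExperiment (C D : Config B S) (sStar : Fin S) (i : ℕ) (ds : List (Fin S)) :
    Prop where
  nodup : (blocks D).Nodup
  length_le : ds.length ≤ (aboveList C sStar i).length
  target_stack :
    D sStar = (C sStar).take (i + 1) ++ ((aboveList C sStar i).drop ds.length).reverse
  ne_target : ∀ d ∈ ds, d ≠ sStar
  dominated : ∀ d, d ≠ sStar → ∀ a ∈ expResult C sStar i ds d, ∃ a' ∈ D d, a' ≤ a
  wellPlaced : ∀ b ∈ (aboveList C sStar i).take ds.length,
    ¬ BadlyPlaced (expResult C sStar i ds) b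

lemma tracksExperiment_nil (hC : IsConfig C) : TracksExperiment C C sStar i [] where
  nodup := nodup_blocks_of_isConfig hC
  length_le := Nat.zero_le _
  target_stack := by simp [aboveList]
  ne_target := by simp
  dominated d hd a ha :=
    ⟨a, by simpa [expResult_nil, Function.update_of_ne hd] using ha, le_rfl⟩
  wellPlaced := by simp

lemma TracksExperiment.target_stack_eq_append {D : Config B S} {ds : List (Fin S)}
    (hT : TracksExperiment C D sStar i ds) (hk : ds.length < (aboveList C sStar i).length) :
    D sStar = ((C sStar).take (i + 1) ++ ((aboveList C sStar i).drop (ds.length + 1)).reverse)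
      ++ [(aboveList C sStar i)[ds.length]] := by
  rw [hT.target_stack, drop_eq_getElem_cons hk]
  simp

lemma nodup_aboveList (hC : IsConfig C) : (aboveList C sStar i).Nodup :=
  nodup_reverse.2 <|
    (nodup_of_nodup_blocks (nodup_blocks_of_isConfig hC) sStar).sublist (drop_sublist _ _)

lemma TracksExperiment.applyMove_relocate_from_target {D : Config B S} {ds : List (Fin S)}
    {dst : Fin S} (hC : IsConfig C) (hT : TracksExperiment C D sStar i ds)
    (hk : ds.length < (aboveList C sStar i).length) (hdst : dst ≠ sStar)
    (hgood :
      ¬ BadlyPlaced (applyMove D (.relocate sStar dst)) (aboveList C sStar i)[ds.length]) :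
    TracksExperiment C (applyMove D (.relocate sStar dst)) sStar i (ds ++ [dst]) := by
  set c := (aboveList C sStar i)[ds.length]
  have hD := hT.target_stack_eq_append hk
  have happly := applyMove_relocate_of_eq_append (dst := dst) hD
  have hc : c ∈ (aboveList C sStar i).drop ds.length := by
    rw [drop_eq_getElem_cons hk]; exact mem_cons_self
  have hcE : ∀ s, c ∉ expResult C sStar i ds s := fun s hcs => by
    have hnd := nodup_blocks_of_isConfig hC
    rw [← blocks_expResult hT.length_le] at hnd
    exact Multiset.disjoint_left.1 (Multiset.nodup_add.1 hnd).2.2 (mem_blocks.2 ⟨s, hcs⟩) hc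
  refine ⟨?_, ?_, ?_, ?_, ?_, ?_⟩
  · rw [blocks_applyMove_relocate hD]; exact hT.nodup
  · simp only [length_append, length_singleton]; omega
  · simp [happly, pushBlock, Function.update_of_ne hdst.symm]
  · intro d hd
    rcases mem_append.1 hd with hd | hd
    · exact hT.ne_target d hd
    · rwa [mem_singleton.1 hd]
  · intro d hd a ha
    rw [expResult_append_singleton dst hk] at ha
    rw [happly]
    rcases eq_or_ne d dst with rfl | hdd
    · simp only [pushBlock, Function.update_self, Function.update_of_ne hd, mem_append,
        mem_singleton] at ha ⊢
      rcases ha with ha | rfl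
      · obtain ⟨a', ha', hle⟩ := hT.dominated d hd a ha
        exact ⟨a', Or.inl ha', hle⟩
      · exact ⟨_, Or.inr rfl, le_rfl⟩
    · simp only [pushBlock, Function.update_of_ne hdd, Function.update_of_ne hd] at ha ⊢
      exact hT.dominated d hd a ha
  · intro b hb
    rw [expResult_append_singleton dst hk]
    rw [length_append, length_singleton, take_add_one, getElem?_eq_getElem hk] at hb
    rcases mem_append.1 hb with hb | hb
    · have hbc : b ≠ c := fun hbc =>
        disjoint_take_drop (nodup_aboveList hC) le_rfl hb (hbc ▸ hc)
      rw [badlyPlaced_pushBlock_iff hbc]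
      exact hT.wellPlaced b hb
    · obtain rfl : b = c := by simpa using hb
      rw [badlyPlaced_pushBlock_self_iff hcE]
      rintro ⟨a, ha, hac⟩
      obtain ⟨a', ha', hle⟩ := hT.dominated dst hdst a ha
      refine hgood (happly ▸ badlyPlaced_pushBlock_of_mem ?_ (hle.trans_lt hac))
      rwa [Function.update_of_ne hdst]

lemma TracksExperiment.applyMove_relocate_off_target {D : Config B S} {ds : List (Fin S)}
    {src dst : Fin S} {l : List (Fin B)} {c : Fin B} (hT : TracksExperiment C D sStar i ds)
    (hsrc : src ≠ sStar) (hdst : dst ≠ sStar) (hl : D src = l ++ [c]) (hc : BadlyPlaced D c) :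
    TracksExperiment C (applyMove D (.relocate src dst)) sStar i ds := by
  have happly := applyMove_relocate_of_eq_append (dst := dst) hl
  have hsub : ∀ d, Function.update D src l d ⊆ applyMove D (.relocate src dst) d := by
    intro d a ha
    rw [happly, pushBlock, Function.update_apply]
    split_ifs with hd
    · exact mem_append_left _ (hd ▸ ha)
    · exact ha
  -- moving the badly placed `c` away leaves a smaller block below it in place
  have hdom : ∀ d, ∀ a ∈ D d, ∃ a' ∈ applyMove D (.relocate src dst) d, a' ≤ a := by
    intro d a ha
    rcases eq_or_ne d src with rfl | hd
    · rw [hl, mem_append, mem_singleton] at ha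
      have hlsub : l ⊆ applyMove D (.relocate d dst) d := by
        simpa using hsub d
      rcases ha with ha | rfl
      · exact ⟨a, hlsub ha, le_rfl⟩
      · obtain ⟨a', ha', hlt⟩ := exists_lt_of_badlyPlaced_top hT.nodup hl hc
        exact ⟨a', hlsub ha', hlt.le⟩
    · exact ⟨a, hsub d (by rwa [Function.update_of_ne hd]), le_rfl⟩
  refine ⟨?_, hT.length_le, ?_, hT.ne_target, ?_, hT.wellPlaced⟩
  · rw [blocks_applyMove_relocate hl]; exact hT.nodup
  · rw [happly, pushBlock, Function.update_of_ne hdst.symm, Function.update_of_ne hsrc.symm]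
    exact hT.target_stack
  · intro d hd a ha
    obtain ⟨a', ha', hle⟩ := hT.dominated d hd a ha
    obtain ⟨a'', ha'', hle'⟩ := hdom d a' ha'
    exact ⟨a'', ha'', hle'.trans hle⟩

lemma TracksExperiment.length_lt {D : Config B S} {ds : List (Fin S)}
    (h4 : P4Cond C sStar i) (hT : TracksExperiment C D sStar i ds) :
    ds.length < (aboveList C sStar i).length := by
  by_contra hge
  have hlen : ds.length = (aboveList C sStar i).length := le_antisymm hT.length_le (not_lt.1 hge)
  obtain ⟨b, hb, hbad⟩ := h4 ds hlen hT.ne_target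
  exact hT.wellPlaced b (by rwa [hlen, take_length]) hbad

theorem TracksExperiment.not_isTight {t : Fin B} (hC : IsConfig C) (ht : ∀ b, t ≤ b)
    (hloc : (C sStar)[i]? = some t) (h4 : P4Cond C sStar i) {D : Config B S}
    {ds : List (Fin S)} {ms : List (Move S)} (hT : TracksExperiment C D sStar i ds) :
    ¬ IsTight D ms := by
  intro hms
  induction ms generalizing D ds with
  | nil =>
    have hD := hT.target_stack_eq_append (hT.length_lt h4)
    rw [show D sStar = [] from hms.1.2 sStar] at hD
    simp at hD
  | cons m ms ih =>
    have hk := hT.length_lt h4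
    have hD := hT.target_stack_eq_append hk
    have htL :
        t ∈ (C sStar).take (i + 1) ++ ((aboveList C sStar i).drop (ds.length + 1)).reverse :=
      mem_append_left _ <| mem_of_getElem? <| by
        rw [getElem?_take, if_pos (Nat.lt_succ_self i), hloc]
    have htD : t ∈ D sStar := by rw [hD]; exact mem_append_left _ htL
    obtain ⟨hm, -⟩ := feasible_cons_iff.1 hms.1
    cases m with
    | retrieve u =>
      -- only the target can be retrieved, but it is not on top
      obtain ⟨r, hr, hmin⟩ := hm
      obtain rfl : r = t := le_antisymm (hmin sStar t htD) (ht r)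
      obtain ⟨l, hl⟩ := getLast?_eq_some_iff.1 hr
      obtain rfl : u = sStar := eq_of_mem_of_nodup_blocks hT.nodup (by simp [hl]) htD
      have hnd := nodup_of_nodup_blocks hT.nodup u
      rw [hD] at hl hnd
      obtain ⟨-, htop⟩ := append_inj' hl rfl
      exact (nodup_append.1 hnd).2.2 r htL r (by simp [htop]) rfl
    | relocate src dst =>
      obtain ⟨l, c, hl, hmoved⟩ := Enabled.exists_movedBlock hm
      obtain ⟨hbad, hgood⟩ := hms.mTypeOf_BG hmoved
      by_cases hdst : dst = sStar
      · subst dst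
        have htc : t < c := lt_of_le_of_ne (ht c) fun htc =>
          not_badlyPlaced_of_forall_le (fun _ a _ => ht a) (htc ▸ hbad)
        refine hgood (applyMove_relocate_of_eq_append hl ▸ badlyPlaced_pushBlock_of_mem ?_ htc)
        rwa [Function.update_of_ne hm.1.symm]
      · by_cases hsrc : src = sStar
        · subst src
          obtain ⟨-, htop⟩ := append_inj' (hl.symm.trans hD) rfl
          obtain rfl : c = (aboveList C sStar i)[ds.length] := by simpa using htop
          exact ih (hT.applyMove_relocate_from_target hC hk hdst hgood) hms.tail
        · exact ih (hT.applyMove_relocate_off_target hsrc hdst hl hbad) hms.tail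

end Experiment

end BRP

theorem brp_LBN_general {B S : ℕ} (hS : 2 ≤ S)
    (C : Config B S) (hC : IsConfig C)
    (sStar : Fin S) (i : ℕ) (t : Fin B)
    (ht : ∀ b, t ≤ b) (hloc : (C sStar)[i]? = some t)
    (h4 : P4Cond C sStar i) :
    {b | BadlyPlaced C b}.ncard + 1 ≤ fRel C Set.univ := by
  obtain ⟨ms₀, hms₀⟩ := BRP.exists_feasible hS C
  refine le_csInf ⟨_, ms₀, hms₀, rfl⟩ ?_
  rintro _ ⟨ms, hms, rfl⟩
  have hlower := BRP.ncard_badlyPlaced_le_countMoves hms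
  by_contra hlt
  exact (BRP.tracksExperiment_nil hC).not_isTight hC ht hloc h4 ⟨hms, by omega⟩

/-- validity of LB-N: if `C` satisfies the condition of Property 4,
then `f(Fin B) ≥ |𝔅¹| + 1`, where `𝔅¹` is the set of badly placed blocks of `C`. -/
theorem brp_LBN {B S : ℕ} (hS : 2 ≤ S) (hB : 1 ≤ B)
    (C : Config B S) (hC : IsConfig C)
    (sStar : Fin S) (i : ℕ) (t : Fin B)
    (ht : ∀ b, t ≤ b) (hloc : (C sStar)[i]? = some t)
    (h4 : P4Cond C sStar i) :
    {b | BadlyPlaced C b}.ncard + 1 ≤ fRel C Set.univ :=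
  brp_LBN_general hS C hC sStar i t ht hloc h4
end

section
/- (Corollary 1, Property 6) Let C be an initial configuration of the BRP in which every stack is nonempty, and let V₁, …, V_k be pairwise disjoint virtual layers of C, each satisfying the conditions of Property 5. Then every feasible move sequence for C contains at least k non-BG relocations of blocks of V₁ ∪ ⋯ ∪ V_k; that is, f_nonBG(V₁ ∪ ⋯ ∪ V_k) ≥ k. -/
/-! For each layer `V i`, the part of every stack of `C` at or below its `V i`-block stays in place
until a block of `V i` is relocated: a block of `V i` cannot be retrieved while the block of
condition (1) of Property 5, smaller than all of `V i`, still lies below the layer, and every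
other move only touches the top of a stack. At the first relocation of a block `b ∈ V i`, the
stack of `b` is exactly its original part at or below `b`, so if `b` is badly placed then it
already was in `C`; by condition (2) every stack then holds, at or below its `V i`-block, a
block smaller than `b`, so `b` is badly placed after the move as well and the move is not BG.
The layers are disjoint, so these first relocations are `k` distinct moves. The bound on
`fNonBG` also needs a feasible sequence to exist (`sInf ∅ = 0`); with two stacks one can always
dig out the smallest block and retrieve it. -/

section Lists

variable {α : Type*}

theorem List.IsPrefix.getElem?_eq {p l : List α} (h : p <+: l) {i : ℕ} {x : α}
    (hx : p[i]? = some x) : l[i]? = some x := by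
  obtain ⟨r, rfl⟩ := h
  rw [List.getElem?_append_left (List.getElem?_eq_some_iff.mp hx).1, hx]

theorem List.IsPrefix.prefix_dropLast_of_ne {p l : List α} (h : p <+: l) (hne : p ≠ l) :
    p <+: l.dropLast := by
  obtain ⟨r, rfl⟩ := h
  have hr : r ≠ [] := by rintro rfl; simp at hne
  rw [List.dropLast_append_of_ne_nil hr]
  exact List.prefix_append _ _

theorem List.IsPrefix.eq_of_getLast?_eq {p l : List α} (h : p <+: l) (hl : l.Nodup) {b : α}
    (hp : p.getLast? = some b) (hb : l.getLast? = some b) : p = l := by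
  obtain ⟨r, rfl⟩ := h
  rcases eq_or_ne r [] with rfl | hr
  · simp
  rw [List.getLast?_append_of_ne_nil _ hr] at hb
  exact absurd (List.mem_of_getLast? hb)
    (List.disjoint_of_nodup_append hl (List.mem_of_getLast? hp))

theorem List.getLast?_take_succ {l : List α} {j : ℕ} {b : α} (h : l[j]? = some b) :
    (l.take (j + 1)).getLast? = some b := by
  simp [List.getLast?_take, h]

end Lists

section Blocks

variable {B S : ℕ}

def blocks (D : Config B S) : Multiset (Fin B) :=
  ∑ s, (D s : Multiset (Fin B))

theorem mem_blocks {D : Config B S} {b : Fin B} : b ∈ blocks D ↔ ∃ s, b ∈ D s := by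
  simp [blocks, Multiset.mem_sum]

theorem IsConfig.nodup_blocks {C : Config B S} (hC : IsConfig C) : (blocks C).Nodup := by
  refine Multiset.nodup_iff_count_le_one.mpr fun b => ?_
  simp only [blocks, Multiset.count_sum', Multiset.coe_count]
  exact (hC b).le

theorem IsConfig.exists_mem {C : Config B S} (hC : IsConfig C) (b : Fin B) : ∃ s, b ∈ C s := by
  obtain ⟨s, -, hs⟩ := Finset.exists_ne_zero_of_sum_ne_zero (hC b ▸ one_ne_zero)
  exact ⟨s, List.count_pos_iff.mp (Nat.pos_of_ne_zero hs)⟩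

theorem nodup_of_nodup_blocks {D : Config B S} (hD : (blocks D).Nodup) (s : Fin S) :
    (D s).Nodup :=
  Multiset.coe_nodup.mp <| Multiset.nodup_of_le
    (Finset.single_le_sum (f := fun s => (D s : Multiset (Fin B)))
    (fun _ _ => Multiset.zero_le _) (Finset.mem_univ s)) hD

theorem eq_of_mem_of_nodup_blocks {D : Config B S} (hD : (blocks D).Nodup) {b : Fin B}
    {s₁ s₂ : Fin S} (h₁ : b ∈ D s₁) (h₂ : b ∈ D s₂) : s₁ = s₂ := by
  by_contra hne
  have hle : (D s₁ : Multiset (Fin B)) + D s₂ ≤ blocks D := by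
    rw [← Finset.sum_pair (f := fun s => (D s : Multiset (Fin B))) hne]
    exact Finset.sum_le_sum_of_subset (Finset.subset_univ _)
  exact Multiset.disjoint_left.mp (Multiset.nodup_add.mp (Multiset.nodup_of_le hle hD)).2.2 h₁ h₂

theorem blocks_update_add (D : Config B S) (s : Fin S) (l : List (Fin B)) :
    blocks (Function.update D s l) + D s = blocks D + l := by
  simp only [blocks, Function.apply_update (fun _ (l : List (Fin B)) => (l : Multiset (Fin B)))]
  rw [Finset.sum_update_of_mem (Finset.mem_univ s), ← Finset.add_sum_erase _ _ (Finset.mem_univ s),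
    Finset.sdiff_singleton_eq_erase]
  abel

theorem blocks_update_dropLast {D : Config B S} {u : Fin S} {b : Fin B}
    (h : (D u).getLast? = some b) :
    blocks (Function.update D u (D u).dropLast) + {b} = blocks D := by
  have hu : (D u : Multiset (Fin B)) = ((D u).dropLast : Multiset (Fin B)) + {b} := by
    conv_lhs => rw [← List.dropLast_append_getLast? b h]
    rw [← Multiset.coe_add, Multiset.coe_singleton]
  have := blocks_update_add D u (D u).dropLast
  rw [hu, ← add_assoc, add_right_comm] at this
  exact add_right_cancel this

theorem blocks_update_concat (D : Config B S) (v : Fin S) (b : Fin B) :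
    blocks (Function.update D v (D v ++ [b])) = blocks D + {b} := by
  have := blocks_update_add D v (D v ++ [b])
  rw [← Multiset.coe_add, Multiset.coe_singleton, add_left_comm, add_comm] at this
  exact add_left_cancel this

theorem blocks_retrieve {D : Config B S} {u : Fin S} {b : Fin B}
    (h : (D u).getLast? = some b) : blocks (applyMove D (.retrieve u)) + {b} = blocks D :=
  blocks_update_dropLast h

theorem blocks_relocate (D : Config B S) (src dst : Fin S) :
    blocks (applyMove D (.relocate src dst)) = blocks D := by
  cases h : (D src).getLast? with
  | none => simp [applyMove, h]
  | some b =>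
    simp only [applyMove, h]
    rw [blocks_update_concat, blocks_update_dropLast h]

theorem blocks_applyMove_le (D : Config B S) (m : Move S) :
    blocks (applyMove D m) ≤ blocks D := by
  cases m with
  | retrieve u =>
    cases h : (D u).getLast? with
    | none =>
      have h0 := List.getLast?_eq_none_iff.mp h
      simp only [applyMove, h0, List.dropLast_nil]
      rw [← h0, Function.update_eq_self]
    | some b => exact blocks_retrieve h ▸ Multiset.le_add_right _ _
  | relocate src dst => exact (blocks_relocate D src dst).le

end Blocks

section Moves

variable {B S : ℕ}

theorem feasible_cons {D : Config B S} {m : Move S} {ms : List (Move S)} :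
    Feasible D (m :: ms) ↔ Enabled D m ∧ Feasible (applyMove D m) ms :=
  and_assoc

theorem applyMove_relocate_src {D : Config B S} {src dst : Fin S} (h : src ≠ dst) :
    applyMove D (.relocate src dst) src = (D src).dropLast := by
  cases hb : (D src).getLast? with
  | none => simp [applyMove, List.getLast?_eq_none_iff.mp hb]
  | some b => simp [applyMove, hb, Function.update_of_ne h]

theorem applyMove_relocate_dst {D : Config B S} {src dst : Fin S} {b : Fin B}
    (hb : (D src).getLast? = some b) (h : src ≠ dst) :
    applyMove D (.relocate src dst) dst = D dst ++ [b] := by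
  simp [applyMove, hb, Function.update_of_ne h.symm]

theorem dropLast_prefix_applyMove (D : Config B S) (m : Move S) (s : Fin S) :
    (D s).dropLast <+: applyMove D m s := by
  cases m with
  | retrieve u =>
    rcases eq_or_ne s u with rfl | h
    · simp [applyMove]
    · simpa [applyMove, Function.update_of_ne h] using List.dropLast_prefix _
  | relocate src dst =>
    cases hb : (D src).getLast? with
    | none => simpa [applyMove, hb] using List.dropLast_prefix _
    | some b =>
      simp only [applyMove, hb, Function.update_apply]
      split_ifs <;> simp_all [(List.dropLast_prefix _).trans]

theorem prefix_applyMove_retrieve {D : Config B S} {u s : Fin S} (h : s ≠ u) :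
    D s <+: applyMove D (.retrieve u) s := by
  simp [applyMove, Function.update_of_ne h]

theorem prefix_applyMove_relocate {D : Config B S} {src dst s : Fin S} (h : s ≠ src) :
    D s <+: applyMove D (.relocate src dst) s := by
  cases hb : (D src).getLast? with
  | none => simp [applyMove, hb]
  | some b =>
    simp only [applyMove, hb, Function.update_apply, h, if_false]
    split_ifs <;> subst_vars <;> simp_all

theorem MovedBlock.unique {D : Config B S} {m : Move S} {b b' : Fin B}
    (h : MovedBlock D m b) (h' : MovedBlock D m b') : b = b' := by
  obtain ⟨src, dst, rfl, -, hb⟩ := h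
  obtain ⟨src', dst', hm, -, hb'⟩ := h'
  cases hm
  exact Option.some_injective _ (hb.symm.trans hb')

end Moves

section Feasibility

variable {B S : ℕ}

theorem exists_feasible_of_min_mem {n : ℕ}
    (ih : ∀ D : Config B S, Multiset.card (blocks D) < n → ∃ ms, Feasible D ms)
    {s t : Fin S} (hst : s ≠ t) {b : Fin B} (pre above : List (Fin B)) (D : Config B S)
    (hn : Multiset.card (blocks D) = n) (hmin : ∀ b' ∈ blocks D, b ≤ b')
    (hs : D s = pre ++ b :: above) : ∃ ms, Feasible D ms := by
  induction above using List.reverseRecOn generalizing D with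
  | nil =>
    have htop : (D s).getLast? = some b := by simp [hs]
    have hen : Enabled D (.retrieve s) :=
      ⟨b, htop, fun s' b' hb' => hmin b' (mem_blocks.2 ⟨s', hb'⟩)⟩
    have hcard := congrArg Multiset.card (blocks_retrieve htop)
    rw [Multiset.card_add, Multiset.card_singleton] at hcard
    obtain ⟨ms, hms⟩ := ih (applyMove D (.retrieve s)) (by omega)
    exact ⟨_, feasible_cons.2 ⟨hen, hms⟩⟩
  | append_singleton above x ih' =>
    have hen : Enabled D (.relocate s t) := ⟨hst, by simp [hs]⟩
    have hblocks := blocks_relocate D s t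
    obtain ⟨ms, hms⟩ := ih' (applyMove D (.relocate s t)) (hblocks ▸ hn) (hblocks ▸ hmin)
      (by rw [applyMove_relocate_src hst, hs, ← List.cons_append, ← List.append_assoc,
        List.dropLast_concat])
    exact ⟨_, feasible_cons.2 ⟨hen, hms⟩⟩

theorem exists_feasible (hS : 2 ≤ S) (D : Config B S) : ∃ ms, Feasible D ms := by
  induction hn : Multiset.card (blocks D) using Nat.strong_induction_on generalizing D with
  | _ n ih =>
  rcases eq_or_ne (blocks D) 0 with h0 | h0
  · refine ⟨[], trivial, fun s => List.eq_nil_iff_forall_not_mem.2 fun b (hb : b ∈ D s) => ?_⟩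
    simpa [h0] using mem_blocks.2 ⟨s, hb⟩
  obtain ⟨b, hb, hmin⟩ := Multiset.exists_min_image id h0
  obtain ⟨s, hs⟩ := mem_blocks.1 hb
  obtain ⟨pre, above, hsplit⟩ := List.append_of_mem hs
  obtain ⟨t, hts⟩ := Fintype.exists_ne_of_one_lt_card (by rw [Fintype.card_fin]; omega) s
  exact exists_feasible_of_min_mem (fun D' hD' => ih _ (hn ▸ hD') D' rfl) hts.symm pre above D
    hn hmin hsplit

theorem countMoves_cons_of_pos {P : Config B S → Move S → Prop} {D : Config B S}
    {m : Move S} (ms : List (Move S)) (hP : P D m) :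
    countMoves P D (m :: ms) = countMoves P (applyMove D m) ms + 1 := by
  rw [countMoves, if_pos hP, add_comm]

theorem countMoves_le_cons (P : Config B S → Move S → Prop) (D : Config B S)
    (m : Move S) (ms : List (Move S)) :
    countMoves P (applyMove D m) ms ≤ countMoves P D (m :: ms) := by
  rw [countMoves]
  exact Nat.le_add_left _ _

theorem le_fMin {C : Config B S} {P : Config B S → Move S → Prop} {n : ℕ}
    (hfeas : ∃ ms, Feasible C ms) (h : ∀ ms, Feasible C ms → n ≤ countMoves P C ms) :
    n ≤ fMin C P := by
  obtain ⟨ms₀, h₀⟩ := hfeas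
  exact le_csInf ⟨_, ms₀, h₀, rfl⟩ (by rintro _ ⟨ms, hms, rfl⟩; exact h ms hms)

end Feasibility

section Layers

variable {B S : ℕ} {C D : Config B S} {V : Set (Fin B)}

theorem StrictlyBelow.of_prefix {E : Config B S} {s : Fin S} {a b : Fin B}
    (h : StrictlyBelow D s a b) (hDE : D s <+: E s) : StrictlyBelow E s a b := by
  obtain ⟨i, j, hij, hi, hj⟩ := h
  exact ⟨i, j, hij, hDE.getElem?_eq hi, hDE.getElem?_eq hj⟩

theorem StrictlyBelow.mem_right {s : Fin S} {a b : Fin B} (h : StrictlyBelow D s a b) :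
    b ∈ D s := by
  obtain ⟨_, _, _, _, hj⟩ := h
  exact List.mem_of_getElem? hj

theorem StrictlyBelow.atOrBelowLayer {s : Fin S} {a b : Fin B} (h : StrictlyBelow C s a b)
    (hb : b ∈ V) : AtOrBelowLayer C V s a := by
  obtain ⟨i, j, hij, hi, hj⟩ := h
  refine ⟨b, j, hb, hj, List.mem_of_getElem? (i := i) ?_⟩
  rw [List.getElem?_take, if_pos (by omega), hi]

theorem badlyPlaced_of_concat {s : Fin S} {l : List (Fin B)} {a b : Fin B}
    (hs : D s = l ++ [b]) (ha : a ∈ l) (hab : a < b) : BadlyPlaced D b := by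
  obtain ⟨i, hi, rfl⟩ := List.getElem_of_mem ha
  refine ⟨s, l[i], hab, i, l.length, hi, ?_, ?_⟩ <;> simp [hs, List.getElem?_append_left hi]

theorem P5.exists_atOrBelowLayer_lt (h : P5 C V) :
    ∃ s a, AtOrBelowLayer C V s a ∧ ∀ c ∈ V, a < c := by
  obtain ⟨-, ⟨s, a, b, hb, hab, hlt⟩, -⟩ := h
  exact ⟨s, a, hab.atOrBelowLayer hb, hlt⟩

def LayerIntact (C : Config B S) (V : Set (Fin B)) (D : Config B S) : Prop :=
  ∀ s j b, b ∈ V → (C s)[j]? = some b → (C s).take (j + 1) <+: D s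

theorem layerIntact_self (C : Config B S) (V : Set (Fin B)) : LayerIntact C V C :=
  fun _ _ _ _ _ => List.take_prefix _ _

theorem LayerIntact.mem (hI : LayerIntact C V D) {s : Fin S} {a : Fin B}
    (ha : AtOrBelowLayer C V s a) : a ∈ D s := by
  obtain ⟨b, j, hb, hj, ha⟩ := ha
  exact (hI s j b hb hj).subset ha

theorem LayerIntact.applyMove (hI : LayerIntact C V D) {m : Move S} (hen : Enabled D m)
    (hlow : ∃ s a, AtOrBelowLayer C V s a ∧ ∀ c ∈ V, a < c)
    (hm : ∀ b ∈ V, ¬ MovedBlock D m b) : LayerIntact C V (applyMove D m) := by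
  intro s j b hb hj
  have hp := hI s j b hb hj
  by_cases hpD : (C s).take (j + 1) = D s
  swap
  · exact (hp.prefix_dropLast_of_ne hpD).trans (dropLast_prefix_applyMove D m s)
  have htop : (D s).getLast? = some b := hpD ▸ List.getLast?_take_succ hj
  rw [hpD]
  cases m with
  | retrieve u =>
    rcases eq_or_ne s u with rfl | hsu
    · obtain ⟨b', htop', hmin⟩ := hen
      obtain ⟨s₁, a, ha, hlt⟩ := hlow
      cases htop.symm.trans htop'
      exact absurd (hmin s₁ a (hI.mem ha)) (not_le.2 (hlt b hb))
    · exact prefix_applyMove_retrieve hsu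
  | relocate src dst =>
    rcases eq_or_ne s src with rfl | hs
    · exact absurd ⟨s, dst, rfl, hen.1, htop⟩ (hm b hb)
    · exact prefix_applyMove_relocate hs

theorem LayerIntact.not_mTypeOf_BG (hD : (blocks D).Nodup) (hI : LayerIntact C V D)
    (hbad : ∀ b ∈ V, BadlyPlaced C b → ∀ s, ∃ a, AtOrBelowLayer C V s a ∧ a < b)
    {m : Move S} {b : Fin B} {s₀ : Fin S} (hb : b ∈ V) (hbC : b ∈ C s₀)
    (hmv : MovedBlock D m b) : ¬ MTypeOf D m b .BG := by
  obtain ⟨src, dst, rfl, hsd, htop⟩ := hmv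
  obtain ⟨j, hj⟩ := List.mem_iff_getElem?.1 hbC
  have hp := hI s₀ j b hb hj
  have htake := List.getLast?_take_succ hj
  obtain rfl : s₀ = src := eq_of_mem_of_nodup_blocks hD
    (hp.subset (List.mem_of_getLast? htake)) (List.mem_of_getLast? htop)
  have hDs : (C s₀).take (j + 1) = D s₀ :=
    hp.eq_of_getLast?_eq (nodup_of_nodup_blocks hD s₀) htake htop
  rintro ⟨⟨s', a, hab, hbelow⟩, hafter⟩
  obtain rfl : s' = s₀ :=
    eq_of_mem_of_nodup_blocks hD hbelow.mem_right (List.mem_of_getLast? htop)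
  have hBP : BadlyPlaced C b := ⟨s', a, hab, hbelow.of_prefix (hDs ▸ List.take_prefix _ _)⟩
  obtain ⟨a', ha', ha'b⟩ := hbad b hb hBP dst
  exact hafter (badlyPlaced_of_concat (applyMove_relocate_dst htop hsd) (hI.mem ha') ha'b)

end Layers

theorem card_le_countMoves_relocNonBGIn {B S k : ℕ} {C : Config B S} (hC : IsConfig C)
    {V : Fin k → Set (Fin B)} (hdisj : ∀ i j, i ≠ j → Disjoint (V i) (V j))
    (h5 : ∀ i, P5 C (V i)) (ms : List (Move S)) (D : Config B S) (I : Finset (Fin k))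
    (hD : (blocks D).Nodup) (hI : ∀ i ∈ I, LayerIntact C (V i) D) (hms : Feasible D ms) :
    I.card ≤ countMoves (RelocNonBGIn (⋃ i, V i)) D ms := by
  induction ms generalizing D I with
  | nil =>
    rcases I.eq_empty_or_nonempty with rfl | ⟨i, hi⟩
    · simp
    obtain ⟨s, a, ha, -⟩ := (h5 i).exists_atOrBelowLayer_lt
    exact absurd (hms.2 s) (List.ne_nil_of_mem ((hI i hi).mem ha))
  | cons m ms ih =>
    obtain ⟨hen, hms'⟩ := feasible_cons.1 hms
    have hD' := Multiset.nodup_of_le (blocks_applyMove_le D m) hD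
    by_cases hmv : ∃ i ∈ I, ∃ b ∈ V i, MovedBlock D m b
    · obtain ⟨i, hi, b, hb, hmb⟩ := hmv
      obtain ⟨s₀, hbC⟩ := hC.exists_mem b
      have hcount : RelocNonBGIn (⋃ i, V i) D m :=
        ⟨b, Set.mem_iUnion.2 ⟨i, hb⟩, hmb, (hI i hi).not_mTypeOf_BG hD (h5 i).2.2 hb hbC hmb⟩
      have hI' : ∀ j ∈ I.erase i, LayerIntact C (V j) (applyMove D m) := by
        intro j hj
        refine (hI j (Finset.mem_of_mem_erase hj)).applyMove hen
          (h5 j).exists_atOrBelowLayer_lt fun b' hb' hmb' => ?_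
        obtain rfl := hmb'.unique hmb
        exact Set.disjoint_left.1 (hdisj j i (Finset.ne_of_mem_erase hj)) hb' hb
      calc I.card = (I.erase i).card + 1 := (Finset.card_erase_add_one hi).symm
        _ ≤ countMoves (RelocNonBGIn (⋃ i, V i)) (applyMove D m) ms + 1 :=
          Nat.add_le_add_right (ih _ _ hD' hI' hms') 1
        _ = _ := (countMoves_cons_of_pos ms hcount).symm
    · push Not at hmv
      have hI' : ∀ i ∈ I, LayerIntact C (V i) (applyMove D m) := fun i hi =>
        (hI i hi).applyMove hen (h5 i).exists_atOrBelowLayer_lt (hmv i hi)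
      exact (ih _ _ hD' hI' hms').trans (countMoves_le_cons _ D m ms)

theorem brp_property6_general {B S : ℕ} (hS : 2 ≤ S)
    (C : Config B S) (hC : IsConfig C)
    (k : ℕ) (V : Fin k → Set (Fin B))
    (hdisj : ∀ i j, i ≠ j → Disjoint (V i) (V j))
    (h5 : ∀ i, P5 C (V i)) :
    (∀ ms, Feasible C ms → k ≤ countMoves (RelocNonBGIn (⋃ i, V i)) C ms) ∧
    k ≤ fNonBG C (⋃ i, V i) := by
  have hall : ∀ ms, Feasible C ms → k ≤ countMoves (RelocNonBGIn (⋃ i, V i)) C ms :=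
    fun ms hms => by
      simpa using card_le_countMoves_relocNonBGIn hC hdisj h5 ms C Finset.univ hC.nodup_blocks
        (fun i _ => layerIntact_self C (V i)) hms
  exact ⟨hall, le_fMin (exists_feasible hS C) hall⟩

/-- Corollary 1, Property 6: if `V₁, …, V_k` are pairwise disjoint
virtual layers each satisfying the conditions of Property 5, then every feasible
move sequence contains at least `k` non-BG relocations of blocks of
`V₁ ∪ ⋯ ∪ V_k`; that is, `f_nonBG(V₁ ∪ ⋯ ∪ V_k) ≥ k`. -/
theorem brp_property6 {B S : ℕ} (hS : 2 ≤ S) (hB : 1 ≤ B)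
    (C : Config B S) (hC : IsConfig C) (hne : ∀ s, C s ≠ [])
    (k : ℕ) (V : Fin k → Set (Fin B))
    (hdisj : ∀ i j, i ≠ j → Disjoint (V i) (V j))
    (h5 : ∀ i, P5 C (V i)) :
    (∀ ms, Feasible C ms → k ≤ countMoves (RelocNonBGIn (⋃ i, V i)) C ms) ∧
    k ≤ fNonBG C (⋃ i, V i) :=
  brp_property6_general hS C hC k V hdisj h5
end
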